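/- Let ρ₁, ρ₂ be density matrices on ℂⁿ, ψ a unit vector in ℂⁿ, and let S be the cyclic shift operator on (ℂⁿ)^{⊗3} defined by S(v₁ ⊗ v₂ ⊗ v₃) = v₃ ⊗ v₁ ⊗ v₂. Then (1/2)·tr[S·(ρ₁ ⊗ ρ₂ ⊗ |ψ⟩⟨ψ|) + (ρ₁ ⊗ ρ₂ ⊗ |ψ⟩⟨ψ|)·S*] = Re tr[S·(ρ₁ ⊗ ρ₂ ⊗ |ψ⟩⟨ψ|)] = (1/2)⟨ψ, {ρ₁,ρ₂}ψ⟩. -/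

import Mathlib

/-!
Since `M = ρ₁ ⊗ ρ₂ ⊗ |ψ⟩⟨ψ|` is Hermitian, `tr[M S*] = conj tr[S M]`, which gives the first
equality. The cyclic shift turns `tr[S (A ⊗ B ⊗ C)]` into `tr[C B A]`, so
`tr[S M] = ⟨ψ, ρ₂ ρ₁ ψ⟩`, whose conjugate is `⟨ψ, ρ₁ ρ₂ ψ⟩` by hermiticity of `ρ₁, ρ₂`.
-/

open Matrix Kronecker ComplexOrder

noncomputable def pureState {n : ℕ} (ψ : Fin n → ℂ) : Matrix (Fin n) (Fin n) ℂ :=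
  vecMulVec ψ (star ψ)

namespace Matrix

variable {ι R : Type*} [Fintype ι]

theorem trace_vecMulVec_mul [NonUnitalCommSemiring R] (u v : ι → R) (X : Matrix ι ι R) :
    (vecMulVec u v * X).trace = v ⬝ᵥ X *ᵥ u := by
  rw [vecMulVec_mul, trace_vecMulVec, dotProduct_comm, dotProduct_mulVec]

theorem trace_mul_conjTranspose_of_isHermitian [NonUnitalSemiring R] [StarRing R]
    {M : Matrix ι ι R} (hM : M.IsHermitian) (S : Matrix ι ι R) :
    (M * Sᴴ).trace = star (S * M).trace := by
  rw [← trace_conjTranspose, conjTranspose_mul, hM.eq]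

theorem star_dotProduct_mulVec [CommSemiring R] [StarRing R] (A : Matrix ι ι R) (x : ι → R) :
    star (star x ⬝ᵥ A *ᵥ x) = star x ⬝ᵥ Aᴴ *ᵥ x := by
  rw [star_dotProduct, star_star, star_mulVec, dotProduct_mulVec]

theorem trace_cyclicShift_mul_kronecker [DecidableEq ι] [CommSemiring R]
    (S : Matrix ((ι × ι) × ι) ((ι × ι) × ι) R)
    (hS : ∀ p q, S p q = if q = ((p.1.2, p.2), p.1.1) then 1 else 0) (A B C : Matrix ι ι R) :
    (S * (A ⊗ₖ B ⊗ₖ C)).trace = (C * (B * A)).trace := by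
  simp only [trace, diag, mul_apply, hS, ite_mul, one_mul, zero_mul, Finset.sum_ite_eq',
    Finset.mem_univ, if_true, kroneckerMap_apply, Fintype.sum_prod_type]
  refine Finset.sum_congr rfl fun i _ => ?_
  rw [Finset.sum_comm]
  simp only [Finset.mul_sum]
  exact Finset.sum_congr rfl fun j _ => Finset.sum_congr rfl fun k _ => by ring

end Matrix

theorem interference_visibility_general {n : ℕ} (ρ₁ ρ₂ : Matrix (Fin n) (Fin n) ℂ)
    (hρ₁ : ρ₁.PosSemidef)
    (hρ₂ : ρ₂.PosSemidef)
    (ψ : Fin n → ℂ)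
    (S : Matrix ((Fin n × Fin n) × Fin n) ((Fin n × Fin n) × Fin n) ℂ)
    (hS : ∀ p q, S p q = if q = ((p.1.2, p.2), p.1.1) then 1 else 0) :
    (1 / 2 : ℂ) * ((S * (ρ₁ ⊗ₖ ρ₂ ⊗ₖ pureState ψ)).trace +
          ((ρ₁ ⊗ₖ ρ₂ ⊗ₖ pureState ψ) * Sᴴ).trace)
        = (((S * (ρ₁ ⊗ₖ ρ₂ ⊗ₖ pureState ψ)).trace.re : ℝ) : ℂ) ∧
    (((S * (ρ₁ ⊗ₖ ρ₂ ⊗ₖ pureState ψ)).trace.re : ℝ) : ℂ)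
        = (1 / 2 : ℂ) * (star ψ ⬝ᵥ (ρ₁ * ρ₂ + ρ₂ * ρ₁) *ᵥ ψ) := by
  set z := (S * (ρ₁ ⊗ₖ ρ₂ ⊗ₖ pureState ψ)).trace with hz_def
  have hM : (ρ₁ ⊗ₖ ρ₂ ⊗ₖ pureState ψ).IsHermitian :=
    ((hρ₁.kronecker hρ₂).kronecker (posSemidef_vecMulVec_self_star ψ)).isHermitian
  have hz : z = star ψ ⬝ᵥ (ρ₂ * ρ₁) *ᵥ ψ := by
    rw [hz_def, trace_cyclicShift_mul_kronecker S hS, pureState, trace_vecMulVec_mul]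
  have hz_star : star z = star ψ ⬝ᵥ (ρ₁ * ρ₂) *ᵥ ψ := by
    rw [hz, star_dotProduct_mulVec, conjTranspose_mul, hρ₁.isHermitian.eq, hρ₂.isHermitian.eq]
  rw [trace_mul_conjTranspose_of_isHermitian hM, Complex.re_eq_add_conj, ← Complex.star_def]
  refine ⟨by ring, ?_⟩
  rw [add_mulVec, dotProduct_add, ← hz, ← hz_star]
  ring

/-- Let `ρ₁, ρ₂` be density matrices on `ℂⁿ`, `ψ` a unit vector, and `S`
the cyclic shift on `(ℂⁿ)^{⊗3}` with `S (v₁ ⊗ v₂ ⊗ v₃) = v₃ ⊗ v₁ ⊗ v₂` (as a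
permutation matrix on `(Fin n × Fin n) × Fin n`, `S p q = 1` iff
`q = ((p.1.2, p.2), p.1.1)`).  Then with `M = ρ₁ ⊗ ρ₂ ⊗ |ψ⟩⟨ψ|`:
`(1/2)(tr[S·M] + tr[M·S*]) = Re tr[S·M] = (1/2)⟨ψ, {ρ₁,ρ₂} ψ⟩`. -/
theorem interference_visibility {n : ℕ} (ρ₁ ρ₂ : Matrix (Fin n) (Fin n) ℂ)
    (hρ₁ : ρ₁.PosSemidef) (hρ₁tr : ρ₁.trace = 1)
    (hρ₂ : ρ₂.PosSemidef) (hρ₂tr : ρ₂.trace = 1)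
    (ψ : Fin n → ℂ) (hψ : star ψ ⬝ᵥ ψ = 1)
    (S : Matrix ((Fin n × Fin n) × Fin n) ((Fin n × Fin n) × Fin n) ℂ)
    (hS : ∀ p q, S p q = if q = ((p.1.2, p.2), p.1.1) then 1 else 0) :
    (1 / 2 : ℂ) * ((S * (ρ₁ ⊗ₖ ρ₂ ⊗ₖ pureState ψ)).trace +
          ((ρ₁ ⊗ₖ ρ₂ ⊗ₖ pureState ψ) * Sᴴ).trace)
        = (((S * (ρ₁ ⊗ₖ ρ₂ ⊗ₖ pureState ψ)).trace.re : ℝ) : ℂ) ∧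
    (((S * (ρ₁ ⊗ₖ ρ₂ ⊗ₖ pureState ψ)).trace.re : ℝ) : ℂ)
        = (1 / 2 : ℂ) * (star ψ ⬝ᵥ (ρ₁ * ρ₂ + ρ₂ * ρ₁) *ᵥ ψ) :=
  interference_visibility_general ρ₁ ρ₂ hρ₁ hρ₂ ψ S hS
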